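/- Let G be a finite group and N a normal subgroup of G contained in the Frattini subgroup Φ(G). If the quotient group G/N satisfies the (μ,λ)-property, then G satisfies the (μ,λ)-property. -/

import Mathlib

open Classical in
/-- The Möbius function of a finite partial order with a top element:
`mob ⊤ = 1` and `mob x = -∑_{x < y ≤ ⊤} mob y` for `x ≠ ⊤`. -/
noncomputable def mob {α : Type*} [PartialOrder α] [OrderTop α] [Finite α] (x : α) : ℤ :=
  if x = ⊤ then 1
  else - ∑ y ∈ (Set.toFinite {y : α | x < y}).toFinset.attach, mob y.1
termination_by (Set.toFinite {y : α | x < y}).toFinset.card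
decreasing_by
  have hy : x < y.1 := by
    have h2 := y.2
    rwa [Set.Finite.mem_toFinset] at h2
  refine Finset.card_lt_card ?_
  rw [Finset.ssubset_iff_of_subset]
  · exact ⟨y.1, by rwa [Set.Finite.mem_toFinset], by simp [Set.Finite.mem_toFinset]⟩
  · intro z hz
    rw [Set.Finite.mem_toFinset] at hz ⊢
    exact hy.trans hz

section C

variable (G : Type*) [Group G]

instance subgroupFinite [Finite G] : Finite (Subgroup G) :=
  Finite.of_injective (fun H => (H : Set G)) SetLike.coe_injective

/-- Type synonym for `Subgroup G`, endowed with the preorder `H ≼ K` iff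
`H ≤ gKg⁻¹` for some `g : G`. -/
def CSub := Subgroup G

variable {G}

/-- Conversion from `Subgroup G` to the type synonym `CSub G`. -/
def CSub.mk (H : Subgroup G) : CSub G := H

/-- Conversion from the type synonym `CSub G` to `Subgroup G`. -/
def CSub.toSubgroup (H : CSub G) : Subgroup G := H

variable (G)

instance : Preorder (CSub G) where
  le H K := ∃ g : G, H.toSubgroup ≤ K.toSubgroup.map (MulAut.conj g).toMonoidHom
  le_refl H := ⟨1, by
    simp only [map_one]
    rw [show MulEquiv.toMonoidHom (1 : MulAut G) = MonoidHom.id G from rfl, Subgroup.map_id]⟩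
  le_trans H K L := by
    rintro ⟨g, hg⟩ ⟨h, hh⟩
    refine ⟨g * h, hg.trans ?_⟩
    have hm := Subgroup.map_mono (f := (MulAut.conj g).toMonoidHom) hh
    rw [Subgroup.map_map] at hm
    refine hm.trans (le_of_eq ?_)
    congr 1
    ext x
    simp [mul_assoc]

instance [Finite G] : Finite (CSub G) := subgroupFinite G

/-- The poset of conjugacy classes of subgroups of `G`: for a finite group this is
the quotient of subgroups by conjugacy, with `[H] ≤ [K]` iff `H ≤ gKg⁻¹` for some `g ∈ G`. -/
abbrev ConjClassSub := Antisymmetrization (CSub G) (· ≤ ·)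

/-- The conjugacy class of a subgroup, as an element of `ConjClassSub G`. -/
def conjClassOf (H : Subgroup G) : ConjClassSub G :=
  toAntisymmetrization (α := CSub G) (· ≤ ·) (CSub.mk H)

instance : OrderTop (ConjClassSub G) where
  top := conjClassOf G ⊤
  le_top c := by
    induction c using Quotient.ind with
    | _ H =>
      show toAntisymmetrization (α := CSub G) (· ≤ ·) H ≤
        toAntisymmetrization (α := CSub G) (· ≤ ·) (CSub.mk ⊤)
      rw [toAntisymmetrization_le_toAntisymmetrization_iff]
      refine ⟨1, ?_⟩
      show H.toSubgroup ≤ Subgroup.map (MulAut.conj (1:G)).toMonoidHom (⊤ : Subgroup G)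
      rw [Subgroup.map_top_of_surjective _ (MulAut.conj (1:G)).surjective]
      exact le_top

instance [Finite G] : Finite (ConjClassSub G) := Quotient.finite _

variable {G}

/-- The Möbius function `μ_G` on the subgroup lattice of the finite group `G`. -/
noncomputable def muSub [Finite G] (H : Subgroup G) : ℤ := mob H

/-- The Möbius function `λ_G` on the poset of conjugacy classes of subgroups of the
finite group `G`, evaluated at the class of `H`. -/
noncomputable def lamSub [Finite G] (H : Subgroup G) : ℤ :=
  mob (conjClassOf G H)

/-- `G` satisfies the (μ,λ)-property if `μ_G(H) = [N_{G'}(H) : G' ∩ H] · λ_G(H)`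
for every subgroup `H ≤ G`, where `G' = [G,G]` and `N_{G'}(H) = N_G(H) ∩ G'`. -/
def MuLambdaProperty (G : Type*) [Group G] [Finite G] : Prop :=
  ∀ H : Subgroup G,
    muSub H =
      ((commutator G ⊓ H).relIndex (Subgroup.normalizer (H : Set G) ⊓ commutator G) : ℤ) * lamSub H

/-- `MaxInt G` consists of `G` itself (the subgroup `⊤`) together with all
intersections of nonempty families of maximal subgroups of `G`. -/
def MaxInt (G : Type*) [Group G] : Set (Subgroup G) :=
  {H | H = ⊤ ∨ ∃ S : Set (Subgroup G), S.Nonempty ∧ (∀ M ∈ S, IsCoatom M) ∧ H = sInf S}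

end C

instance {n R : Type*} [DecidableEq n] [Fintype n] [CommRing R] [Finite R] :
    Finite (Matrix.SpecialLinearGroup n R) :=
  Finite.of_injective (fun A => (A : Matrix n n R)) Subtype.coe_injective

open scoped MatrixGroups

/-!
For `N ≤ H`, the correspondence theorem identifies the subgroups above `H`, and the conjugacy
classes above `[H]`, with those above `H/N` in `G/N`; so `μ` and `λ` take their values at `H/N`,
and the index `[N_{G'}(H) : G' ∩ H]` is unchanged because `N ∩ N_{G'}(H) ≤ G' ∩ H`.
For `N ≰ H` both values vanish: every `K` has a join `KN` with `N` (resp. `[N]`), and `KN = G`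
forces `K = G` since `N ≤ Φ(G)`; in such a poset the Möbius function vanishes off the upper set
of `N`.
-/

section Mobius

variable {α β : Type*} [PartialOrder α] [OrderTop α] [Finite α]
  [PartialOrder β] [OrderTop β] [Finite β]

theorem mob_top : mob (⊤ : α) = 1 := by
  rw [mob, if_pos rfl]

theorem mob_eq_neg_sum_Ioi {x : α} (hx : x ≠ ⊤) :
    mob x = -∑ y ∈ (Set.toFinite (Set.Ioi x)).toFinset, mob y := by
  rw [mob, if_neg hx, Finset.sum_attach _ mob]
  rfl

theorem sum_mob_Ici_eq_zero {x : α} (hx : x ≠ ⊤) :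
    ∑ y ∈ (Set.toFinite (Set.Ici x)).toFinset, mob y = 0 := by
  classical
  rw [← Set.Ioi_insert, Set.Finite.toFinset_insert, Finset.sum_insert (by simp),
    mob_eq_neg_sum_Ioi hx, neg_add_cancel]

theorem mob_eq_zero_of_not_le {n : α} (h_join : ∀ x, ∃ z, IsLUB {x, n} z)
    (h_nongen : ∀ x, IsLUB {x, n} ⊤ → x = ⊤) {x : α} (hx : ¬n ≤ x) : mob x = 0 := by
  classical
  induction x using WellFoundedGT.induction with
  | _ x ih =>
  obtain ⟨z, hz⟩ := h_join x
  have hx_top : x ≠ ⊤ := by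
    rintro rfl
    exact hx le_top
  have hz_top : z ≠ ⊤ := fun h => hx_top (h_nongen x (h ▸ hz))
  have h_above_n : (Set.toFinite (Set.Ici x)).toFinset.filter (n ≤ ·) =
      (Set.toFinite (Set.Ici z)).toFinset := by
    ext y
    simp [isLUB_le_iff hz]
  -- `∑_{y ≥ x} mob y = 0` splits into `∑_{y ≥ z} mob y = 0` and terms vanishing by induction
  have h_split :=
    Finset.sum_filter_add_sum_filter_not (Set.toFinite (Set.Ici x)).toFinset (n ≤ ·) mob
  rw [h_above_n, sum_mob_Ici_eq_zero hz_top, sum_mob_Ici_eq_zero hx_top, zero_add,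
    Finset.sum_eq_single_of_mem x (by simp [hx])] at h_split
  · exact h_split
  · simp only [Finset.mem_filter, Set.Finite.mem_toFinset, Set.mem_Ici]
    exact fun y ⟨hxy, hy⟩ hyx => ih y (lt_of_le_of_ne hxy (Ne.symm hyx)) hy

theorem mob_orderEmbedding_apply (f : β ↪o α) (hf : IsUpperSet (Set.range f)) (x : β) :
    mob (f x) = mob x := by
  have hf_top : f ⊤ = ⊤ := by
    obtain ⟨b, hb⟩ := hf le_top (Set.mem_range_self x)
    exact top_unique (hb ▸ f.monotone le_top)
  induction x using WellFoundedGT.induction with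
  | _ x ih =>
  by_cases hx : x = ⊤
  · rw [hx, hf_top, mob_top, mob_top]
  have hfx : f x ≠ ⊤ := fun h => hx (f.injective (h.trans hf_top.symm))
  rw [mob_eq_neg_sum_Ioi hfx, mob_eq_neg_sum_Ioi hx, neg_inj, eq_comm]
  refine Finset.sum_nbij f (by simp) f.injective.injOn ?_
    (fun y hy => (ih y (by simpa using hy)).symm)
  intro z hz
  simp only [Set.Finite.coe_toFinset, Set.mem_Ioi] at hz
  obtain ⟨y, rfl⟩ := hf hz.le (Set.mem_range_self x)
  exact ⟨y, by simpa using hz, rfl⟩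

end Mobius

section Frattini

variable {G : Type*} [Group G] [IsCoatomic (Subgroup G)]

theorem eq_top_of_sup_eq_top_of_le_frattini {K N : Subgroup G} (hN : N ≤ frattini G)
    (h : K ⊔ N = ⊤) : K = ⊤ :=
  frattini_nongenerating (top_unique (h ▸ sup_le_sup_left hN K))

end Frattini

namespace Subgroup

variable {G G' : Type*} [Group G] [Group G']

theorem map_inf_eq_of_ker_le (f : G →* G') {A B : Subgroup G} (hB : f.ker ≤ B) :
    (A ⊓ B).map f = A.map f ⊓ B.map f := by
  refine le_antisymm (map_inf_le A B f) ?_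
  rintro _ ⟨⟨a, ha, rfl⟩, ⟨b, hb, hba⟩⟩
  have hab : b⁻¹ * a ∈ f.ker := by simp [MonoidHom.mem_ker, hba]
  exact ⟨a, ⟨ha, by simpa using B.mul_mem hb (hB hab)⟩, rfl⟩

theorem map_commutator_of_surjective {f : G →* G'} (hf : Function.Surjective f) :
    (_root_.commutator G).map f = _root_.commutator G' := by
  simpa only [derivedSeries_one] using map_derivedSeries_eq hf 1

theorem map_normalizer_of_surjective_of_ker_le {f : G →* G'} (hf : Function.Surjective f)
    {H : Subgroup G} (hH : f.ker ≤ H) :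
    (normalizer (H : Set G)).map f = normalizer (H.map f : Set G') := by
  conv_lhs => rw [← comap_map_eq_self hH]
  rw [← comap_normalizer_eq_of_surjective _ hf, map_comap_eq_self_of_surjective hf]

theorem relIndex_sup_normal_eq [Finite G] {A B N : Subgroup G} [N.Normal] (hBA : B ≤ A)
    (hAN : A ⊓ N ≤ B) : (B ⊔ N).relIndex (A ⊔ N) = B.relIndex A := by
  have hNA : N ⊓ A = N ⊓ B := le_antisymm (le_inf inf_le_left (inf_comm N A ▸ hAN))
    (inf_le_inf_left N hBA)
  refine Nat.eq_of_mul_eq_mul_left (Nat.pos_of_ne_zero (N.subgroupOf B).index_ne_zero_of_finite) ?_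
  calc N.relIndex B * (B ⊔ N).relIndex (A ⊔ N)
      = N.relIndex (B ⊔ N) * (B ⊔ N).relIndex (A ⊔ N) := by rw [relIndex_sup_right]
    _ = N.relIndex A := by
      rw [relIndex_mul_relIndex _ _ _ le_sup_right (sup_le_sup_right hBA N), relIndex_sup_right]
    _ = (N ⊓ B).relIndex A := by rw [← hNA, inf_relIndex_right]
    _ = N.relIndex B * B.relIndex A := by
      rw [← relIndex_mul_relIndex _ _ _ inf_le_right hBA, inf_relIndex_right]

end Subgroup

namespace QuotientGroup

variable {G : Type*} [Group G] (N : Subgroup G) [N.Normal]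

def comapMk'OrderEmbedding : Subgroup (G ⧸ N) ↪o Subgroup G :=
  OrderEmbedding.ofMapLEIff (Subgroup.comap (mk' N))
    fun _ _ => Subgroup.comap_le_comap_of_surjective (mk'_surjective N)

theorem isUpperSet_range_comapMk'OrderEmbedding :
    IsUpperSet (Set.range (comapMk'OrderEmbedding N)) := by
  rintro _ K hLK ⟨L, rfl⟩
  have hNK : N ≤ K := (le_comap_mk' N L).trans hLK
  exact ⟨K.map (mk' N), by simpa [comapMk'OrderEmbedding] using hNK⟩

variable {N}

open Subgroup in
theorem relIndex_commutator_inf_map_mk' [Finite G] {H : Subgroup G} (hNH : N ≤ H) :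
    (commutator (G ⧸ N) ⊓ H.map (mk' N)).relIndex
        (normalizer (H.map (mk' N) : Set (G ⧸ N)) ⊓ commutator (G ⧸ N)) =
      (commutator G ⊓ H).relIndex (normalizer (H : Set G) ⊓ commutator G) := by
  have hker : (mk' N).ker ≤ H := (ker_mk' N).le.trans hNH
  have hG' := map_commutator_of_surjective (mk'_surjective N)
  have h_inf : (commutator G ⊓ H).map (mk' N) = commutator (G ⧸ N) ⊓ H.map (mk' N) := by
    rw [map_inf_eq_of_ker_le _ hker, hG']
  have h_normalizer_inf : (normalizer (H : Set G) ⊓ commutator G).map (mk' N) =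
      normalizer (H.map (mk' N) : Set (G ⧸ N)) ⊓ commutator (G ⧸ N) := by
    rw [inf_comm, map_inf_eq_of_ker_le _ (hker.trans le_normalizer), inf_comm, hG',
      map_normalizer_of_surjective_of_ker_le (mk'_surjective N) hker]
  rw [← h_inf, ← h_normalizer_inf, relIndex_map_map, ker_mk']
  exact relIndex_sup_normal_eq (le_inf (inf_le_right.trans le_normalizer) inf_le_left)
    (le_inf (inf_le_left.trans inf_le_right) (inf_le_right.trans hNH))

end QuotientGroup

section MuSub

open QuotientGroup

variable {G : Type*} [Group G] [Finite G] {N : Subgroup G}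

theorem muSub_eq_muSub_map_mk' [N.Normal] {H : Subgroup G} (hNH : N ≤ H) :
    muSub H = muSub (H.map (mk' N)) := by
  have hH : comapMk'OrderEmbedding N (H.map (mk' N)) = H := by
    simpa [comapMk'OrderEmbedding] using hNH
  rw [muSub, muSub, ← mob_orderEmbedding_apply _ (isUpperSet_range_comapMk'OrderEmbedding N), hH]

theorem muSub_eq_zero_of_not_le (hN : N ≤ frattini G) {H : Subgroup G} (hNH : ¬N ≤ H) :
    muSub H = 0 :=
  mob_eq_zero_of_not_le (fun _ => ⟨_, isLUB_pair⟩)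
    (fun _ hK => eq_top_of_sup_eq_top_of_le_frattini hN (hK.unique isLUB_pair).symm) hNH

end MuSub

section ConjClassSub

open scoped Pointwise
open QuotientGroup

variable {G : Type*} [Group G]

-- `K.map (MulAut.conj g).toMonoidHom` is definitionally the pointwise action `MulAut.conj g • K`.
theorem CSub.mk_le_mk_iff {H K : Subgroup G} :
    CSub.mk H ≤ CSub.mk K ↔ ∃ g : G, H ≤ MulAut.conj g • K :=
  Iff.rfl

theorem conjClassOf_le_conjClassOf_iff {H K : Subgroup G} :
    conjClassOf G H ≤ conjClassOf G K ↔ ∃ g : G, H ≤ MulAut.conj g • K :=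
  toAntisymmetrization_le_toAntisymmetrization_iff

theorem conjClassOf_mono : Monotone (conjClassOf G) :=
  fun _ _ h => conjClassOf_le_conjClassOf_iff.2 ⟨1, by simpa using h⟩

theorem conjClassOf_surjective : Function.Surjective (conjClassOf G) :=
  Quotient.ind fun K => ⟨K, rfl⟩

theorem conjClassOf_eq_top_iff {K : Subgroup G} : conjClassOf G K = ⊤ ↔ K = ⊤ := by
  refine ⟨fun h => ?_, fun h => h ▸ rfl⟩
  obtain ⟨g, hg⟩ := conjClassOf_le_conjClassOf_iff.1 (h.symm.le : conjClassOf G ⊤ ≤ _)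
  rw [Subgroup.subset_pointwise_smul_iff] at hg
  exact top_unique <|
    (Subgroup.map_top_of_surjective _ (MulAut.conj g)⁻¹.surjective).ge.trans hg

theorem Subgroup.Normal.le_conj_smul_iff {N K : Subgroup G} [N.Normal] (g : G) :
    N ≤ MulAut.conj g • K ↔ N ≤ K := by
  conv_lhs => rw [← Subgroup.Normal.conj_smul_eq_self g N]
  exact Subgroup.pointwise_smul_le_pointwise_smul_iff

theorem Subgroup.Normal.conjClassOf_le_iff {N K : Subgroup G} [N.Normal] :
    conjClassOf G N ≤ conjClassOf G K ↔ N ≤ K := by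
  simp [conjClassOf_le_conjClassOf_iff, Subgroup.Normal.le_conj_smul_iff]

theorem isLUB_conjClassOf_sup (K N : Subgroup G) [N.Normal] :
    IsLUB {conjClassOf G K, conjClassOf G N} (conjClassOf G (K ⊔ N)) := by
  refine ⟨?_, fun y hy => ?_⟩
  · simp [upperBounds, conjClassOf_mono le_sup_left, conjClassOf_mono le_sup_right]
  obtain ⟨L, rfl⟩ := conjClassOf_surjective y
  simp only [upperBounds, Set.mem_insert_iff, Set.mem_singleton_iff, forall_eq_or_imp,
    forall_eq, Set.mem_ofPred_eq, Subgroup.Normal.conjClassOf_le_iff] at hy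
  obtain ⟨⟨g, hKL⟩, hNL⟩ := hy
  exact conjClassOf_le_conjClassOf_iff.2
    ⟨g, sup_le hKL ((Subgroup.Normal.le_conj_smul_iff g).2 hNL)⟩

variable (N : Subgroup G) [N.Normal]

theorem comap_mk'_conj_smul (g : G) (L : Subgroup (G ⧸ N)) :
    (MulAut.conj (g : G ⧸ N) • L).comap (mk' N) = MulAut.conj g • L.comap (mk' N) := by
  ext x
  simp [Subgroup.mem_pointwise_smul_iff_inv_smul_mem, MulAut.smul_def]

def CSub.comapMk' : CSub (G ⧸ N) →o CSub G where
  toFun L := CSub.mk (L.toSubgroup.comap (mk' N))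
  monotone' L L' := by
    rintro ⟨g, hg⟩
    obtain ⟨g, rfl⟩ := mk'_surjective N g
    refine CSub.mk_le_mk_iff.2 ⟨g, ?_⟩
    rw [← comap_mk'_conj_smul]
    exact Subgroup.comap_mono hg

def conjClassComapMk' : ConjClassSub (G ⧸ N) ↪o ConjClassSub G :=
  OrderEmbedding.ofMapLEIff (CSub.comapMk' N).antisymmetrization fun x y => by
    obtain ⟨L, rfl⟩ := conjClassOf_surjective x
    obtain ⟨L', rfl⟩ := conjClassOf_surjective y
    refine ⟨fun h => ?_, fun h => OrderHom.monotone _ h⟩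
    change conjClassOf G (L.comap (mk' N)) ≤ conjClassOf G (L'.comap (mk' N)) at h
    obtain ⟨g, hg⟩ := conjClassOf_le_conjClassOf_iff.1 h
    rw [← comap_mk'_conj_smul, Subgroup.comap_le_comap_of_surjective (mk'_surjective N)] at hg
    exact conjClassOf_le_conjClassOf_iff.2 ⟨_, hg⟩

theorem conjClassComapMk'_conjClassOf (L : Subgroup (G ⧸ N)) :
    conjClassComapMk' N (conjClassOf _ L) = conjClassOf G (L.comap (mk' N)) :=
  OrderHom.antisymmetrization_apply_mk _ _

theorem isUpperSet_range_conjClassComapMk' : IsUpperSet (Set.range (conjClassComapMk' N)) := by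
  rintro _ y hxy ⟨x, rfl⟩
  obtain ⟨L, rfl⟩ := conjClassOf_surjective x
  obtain ⟨K, rfl⟩ := conjClassOf_surjective y
  rw [conjClassComapMk'_conjClassOf] at hxy
  have hNK : N ≤ K := Subgroup.Normal.conjClassOf_le_iff.1 <|
    (conjClassOf_mono (le_comap_mk' N L)).trans hxy
  exact ⟨conjClassOf _ (K.map (mk' N)), by
    rw [conjClassComapMk'_conjClassOf, comap_map_mk', sup_eq_right.2 hNK]⟩

end ConjClassSub

section LamSub

open QuotientGroup

variable {G : Type*} [Group G] [Finite G] {N : Subgroup G} [N.Normal]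

theorem lamSub_eq_lamSub_map_mk' {H : Subgroup G} (hNH : N ≤ H) :
    lamSub H = lamSub (H.map (mk' N)) := by
  rw [lamSub, lamSub, ← mob_orderEmbedding_apply _ (isUpperSet_range_conjClassComapMk' N),
    conjClassComapMk'_conjClassOf, comap_map_mk', sup_eq_right.2 hNH]

theorem lamSub_eq_zero_of_not_le (hN : N ≤ frattini G) {H : Subgroup G} (hNH : ¬N ≤ H) :
    lamSub H = 0 := by
  refine mob_eq_zero_of_not_le (n := conjClassOf G N) (fun x => ?_) (fun x hx => ?_)
    (mt Subgroup.Normal.conjClassOf_le_iff.1 hNH)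
  · obtain ⟨K, rfl⟩ := conjClassOf_surjective x
    exact ⟨_, isLUB_conjClassOf_sup K N⟩
  · obtain ⟨K, rfl⟩ := conjClassOf_surjective x
    have hKN : K ⊔ N = ⊤ :=
      conjClassOf_eq_top_iff.1 (hx.unique (isLUB_conjClassOf_sup K N)).symm
    exact conjClassOf_eq_top_iff.2 (eq_top_of_sup_eq_top_of_le_frattini hN hKN)

end LamSub

/-- If `N` is a normal subgroup of `G` contained in the Frattini subgroup and `G/N`
satisfies the (μ,λ)-property, then so does `G`. -/
theorem muLambdaProperty_of_quotient_frattini (G : Type*) [Group G] [Finite G]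
    (N : Subgroup G) [N.Normal] (hN : N ≤ frattini G)
    (h : MuLambdaProperty (G ⧸ N)) :
    MuLambdaProperty G := by
  intro H
  by_cases hNH : N ≤ H
  · rw [muSub_eq_muSub_map_mk' hNH, lamSub_eq_lamSub_map_mk' hNH, h,
      QuotientGroup.relIndex_commutator_inf_map_mk' hNH]
  · rw [muSub_eq_zero_of_not_le hN hNH, lamSub_eq_zero_of_not_le hN hNH, mul_zero]
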